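/- arXiv:0909.4101 — 2 statements merged into one kernel-verified Lean document; each statement's English description precedes it below -/
import Mathlib

section
/- For every x ∈ S^n, every f ∈ H_d with ‖f‖_W = 1, and every g ∈ Σ_ℝ(x), one has ‖f − g‖_W ≥ κ̃(f,x)^{-1}. -/
open MvPolynomial Finset ENNReal

/-- Bombieri–Weyl inner product of two polynomials (intended for homogeneous
polynomials of the same degree `d`): `⟨Σ aⱼ xʲ, Σ bⱼ xʲ⟩_W = Σ aⱼ bⱼ / binom(d, j)`
where `binom(d, j) = d! / (j₀! ⋯ jₙ!)`. -/
noncomputable def bwInner {m : ℕ} (p q : MvPolynomial (Fin m) ℝ) : ℝ :=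
  ∑ j ∈ p.support ∪ q.support,
    (p.coeff j * q.coeff j) / (Nat.multinomial Finset.univ j : ℝ)

/-- Bombieri–Weyl norm of one polynomial. -/
noncomputable def bwNorm {m : ℕ} (p : MvPolynomial (Fin m) ℝ) : ℝ :=
  Real.sqrt (bwInner p p)

/-- Bombieri–Weyl norm `‖f‖_W` of a system `f = (f_1, …, f_n)`. -/
noncomputable def bwNormSys {n : ℕ} (f : Fin n → MvPolynomial (Fin (n + 1)) ℝ) : ℝ :=
  Real.sqrt (∑ i, bwInner (f i) (f i))

/-- Distance (w.r.t. the Bombieri–Weyl norm) from a system `f` to a set `S` of systems. -/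
noncomputable def bwDist {n : ℕ} (f : Fin n → MvPolynomial (Fin (n + 1)) ℝ)
    (S : Set (Fin n → MvPolynomial (Fin (n + 1)) ℝ)) : ℝ :=
  sInf ((fun g => bwNormSys (f - g)) '' S)

/-- The unit sphere `Sⁿ ⊆ ℝ^{n+1}`. -/
def unitSphere (n : ℕ) : Set (Fin (n + 1) → ℝ) := {x | ∑ k, x k ^ 2 = 1}

/-- `f` belongs to `H_d`: each component is homogeneous of degree `d i`. -/
def IsSystem {n : ℕ} (d : Fin n → ℕ) (f : Fin n → MvPolynomial (Fin (n + 1)) ℝ) : Prop :=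
  ∀ i, (f i).IsHomogeneous (d i)

/-- The derivative `Df(x)` restricted to the tangent space `T_x Sⁿ = x^⊥` is singular,
i.e. it kills some nonzero tangent vector `v`. -/
def SingularAt {n : ℕ} (f : Fin n → MvPolynomial (Fin (n + 1)) ℝ)
    (x : Fin (n + 1) → ℝ) : Prop :=
  ∃ v : Fin (n + 1) → ℝ, v ≠ 0 ∧ (∑ k, v k * x k = 0) ∧
    ∀ i, ∑ k, MvPolynomial.eval x (MvPolynomial.pderiv k (f i)) * v k = 0

/-- `Σ_ℝ(x)`: the systems in `H_d` having `x` as a multiple zero. -/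
def SigmaRx {n : ℕ} (d : Fin n → ℕ) (x : Fin (n + 1) → ℝ) :
    Set (Fin n → MvPolynomial (Fin (n + 1)) ℝ) :=
  {g | IsSystem d g ∧ (∀ i, MvPolynomial.eval x (g i) = 0) ∧ SingularAt g x}

/-- `Σ_ℝ = ⋃_{x ∈ Sⁿ} Σ_ℝ(x)`: the systems in `H_d` with a multiple zero on `Sⁿ`. -/
def SigmaR {n : ℕ} (d : Fin n → ℕ) : Set (Fin n → MvPolynomial (Fin (n + 1)) ℝ) :=
  ⋃ x ∈ unitSphere n, SigmaRx d x

/-- The smallest singular value of `diag(1/√dᵢ) · Df(x)|_{T_x Sⁿ}`, i.e.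
`inf {‖diag(1/√dᵢ)·Df(x) v‖₂ : v ⊥ x, ‖v‖₂ = 1}`.  This equals
`‖f‖_W · μ̃_norm(f,x)⁻¹`, where `μ̃_norm(f,x) = ‖f‖_W ‖(Df(x)|_{T_x Sⁿ})⁻¹ diag(√dᵢ)‖`
(spectral norm, `+∞` when `Df(x)|_{T_x Sⁿ}` is singular); it is `0` exactly
when `μ̃_norm(f,x) = +∞`. -/
noncomputable def sigmaMin {n : ℕ} (d : Fin n → ℕ)
    (f : Fin n → MvPolynomial (Fin (n + 1)) ℝ) (x : Fin (n + 1) → ℝ) : ℝ :=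
  sInf ((fun v => Real.sqrt (∑ i,
      ((∑ k, MvPolynomial.eval x (MvPolynomial.pderiv k (f i)) * v k) / Real.sqrt (d i)) ^ 2)) ''
    {v : Fin (n + 1) → ℝ | (∑ k, v k * x k = 0) ∧ ∑ k, v k ^ 2 = 1})

/-- `κ̃(f, x) = ‖f‖_W / (‖f‖_W² μ̃_norm(f,x)⁻² + ‖f(x)‖₂²)^{1/2}` as an extended
nonnegative real (value `+∞` when `f` has `x` as multiple zero), using
`‖f‖_W² μ̃_norm(f,x)⁻² = (sigmaMin d f x)²`. -/
noncomputable def kappaAt {n : ℕ} (d : Fin n → ℕ)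
    (f : Fin n → MvPolynomial (Fin (n + 1)) ℝ) (x : Fin (n + 1) → ℝ) : ℝ≥0∞ :=
  ENNReal.ofReal (bwNormSys f) /
    ENNReal.ofReal (Real.sqrt (sigmaMin d f x ^ 2 + ∑ i, (MvPolynomial.eval x (f i)) ^ 2))

/-- `κ̃(f) = max_{x ∈ Sⁿ} κ̃(f, x)`. -/
noncomputable def kappa {n : ℕ} (d : Fin n → ℕ)
    (f : Fin n → MvPolynomial (Fin (n + 1)) ℝ) : ℝ≥0∞ :=
  ⨆ x ∈ unitSphere n, kappaAt d f x

/-!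
For a form `p` of degree `e`, the Bombieri–Weyl product makes multiplication by `Xₖ` adjoint to
`∂ₖ / e`. Together with Euler's identity this shows that `u = (∑ xₖ Xₖ)ᵉ` reproduces evaluation
at `x` and `w = (∑ vₖ Xₖ)(∑ xₖ Xₖ)ᵉ⁻¹` reproduces `Dp(x)v / e`. For `x` and `v` orthonormal, `u`
and `w` are orthogonal with `‖u‖² = 1` and `‖w‖² = 1 / e`, so projecting `p` onto their span
gives `p(x)² + (Dp(x)v)² / e ≤ ‖p‖²`. Apply this to `p = fᵢ - gᵢ`, with `v` a unit tangent
vector killed by `Dg(x)`: then `p(x) = fᵢ(x)` and `Dp(x)v = Dfᵢ(x)v`, and summing over `i`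
bounds `σ_min(f, x)² + ‖f(x)‖²`, which is `κ̃(f, x)⁻²` when `‖f‖_W = 1`, by `‖f - g‖²`.
-/

theorem LinearMap.BilinForm.IsPosSemidef.apply_self_le_of_apply_eq {R M : Type*} [CommRing R]
    [LinearOrder R] [IsStrictOrderedRing R] [AddCommGroup M] [Module R M]
    {B : LinearMap.BilinForm R M} (hB : B.IsPosSemidef) {x y : M} (h : B x y = B y y) :
    B y y ≤ B x x := by
  have hcs := B.apply_sq_le_of_symm hB.nonneg (isSymm_iff.mp hB.isSymm) x y
  rw [h, sq] at hcs
  rcases (hB.nonneg y).eq_or_lt with hy | hy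
  · exact hy ▸ hB.nonneg x
  · exact le_of_mul_le_mul_right hcs hy

theorem Nat.multinomial_single_add_mul {σ : Type*} [Fintype σ] (b : σ →₀ ℕ) (k : σ) :
    Nat.multinomial univ ⇑(Finsupp.single k 1 + b : σ →₀ ℕ) * (b k + 1)
      = (b.degree + 1) * Nat.multinomial univ ⇑b := by
  classical
  set b' : σ →₀ ℕ := Finsupp.single k 1 + b
  have hprod : ∏ i, (b' i).factorial = (b k + 1) * ∏ i, (b i).factorial := by
    rw [← Finset.mul_prod_erase _ _ (mem_univ k),
      ← Finset.mul_prod_erase _ (fun i => (b i).factorial) (mem_univ k),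
      Finset.prod_congr rfl fun i hi => by
        rw [Finsupp.add_apply, Finsupp.single_eq_of_ne (ne_of_mem_erase hi), zero_add]]
    simp only [b', Finsupp.add_apply, Finsupp.single_eq_same]
    rw [add_comm 1, Nat.factorial_succ, mul_assoc]
  have hsum : ∑ i, b' i = b.degree + 1 := by
    rw [← Finsupp.degree_eq_sum, map_add, Finsupp.degree_single, add_comm]
  have h1 := Nat.multinomial_spec univ ⇑b'
  have h2 := Nat.multinomial_spec univ ⇑b
  rw [hprod, hsum, Nat.factorial_succ, Finsupp.degree_eq_sum, ← h2] at h1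
  refine Nat.eq_of_mul_eq_mul_left (prod_pos (s := univ) fun i _ => Nat.factorial_pos (b i)) ?_
  rw [Finsupp.degree_eq_sum]
  linear_combination h1

section BombieriWeyl

variable {m : ℕ}

theorem bwInner_eq_sum_of_support_subset {p q : MvPolynomial (Fin m) ℝ}
    {s : Finset (Fin m →₀ ℕ)} (hs : q.support ⊆ s) :
    bwInner p q = ∑ j ∈ s, p.coeff j * q.coeff j / (Nat.multinomial univ j : ℝ) := by
  have hzero : ∀ j ∉ q.support, p.coeff j * q.coeff j / (Nat.multinomial univ j : ℝ) = 0 :=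
    fun j hj => by rw [notMem_support_iff.mp hj, mul_zero, zero_div]
  rw [bwInner, ← sum_subset subset_union_right fun j _ hj => hzero j hj,
    sum_subset hs fun j _ hj => hzero j hj]

theorem bwInner_comm (p q : MvPolynomial (Fin m) ℝ) : bwInner p q = bwInner q p := by
  simp only [bwInner, union_comm, mul_comm]

noncomputable def bwForm : LinearMap.BilinForm ℝ (MvPolynomial (Fin m) ℝ) :=
  LinearMap.mk₂ ℝ bwInner
    (fun p p' q => by
      simp only [bwInner_eq_sum_of_support_subset (subset_refl q.support), coeff_add, add_mul,
        add_div, sum_add_distrib])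
    (fun c p q => by
      simp only [bwInner_eq_sum_of_support_subset (subset_refl q.support), coeff_smul,
        smul_eq_mul, mul_sum, mul_assoc, mul_div_assoc])
    (fun p q q' => by
      simp only [bwInner_comm p, bwInner_eq_sum_of_support_subset (subset_refl p.support),
        coeff_add, add_mul, add_div, sum_add_distrib])
    (fun c p q => by
      simp only [bwInner_comm p, bwInner_eq_sum_of_support_subset (subset_refl p.support),
        coeff_smul, smul_eq_mul, mul_sum, mul_assoc, mul_div_assoc])

theorem bwForm_apply (p q : MvPolynomial (Fin m) ℝ) : bwForm p q = bwInner p q := rfl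

theorem bwForm_isPosSemidef : (bwForm (m := m)).IsPosSemidef where
  eq := bwInner_comm
  nonneg _ := sum_nonneg fun _ _ => div_nonneg (mul_self_nonneg _) (Nat.cast_nonneg _)

theorem bwInner_X_mul {e : ℕ} {p : MvPolynomial (Fin m) ℝ} (hp : p.IsHomogeneous (e + 1))
    (k : Fin m) (q : MvPolynomial (Fin m) ℝ) :
    (e + 1 : ℝ) * bwInner p (X k * q) = bwInner (pderiv k p) q := by
  rw [bwInner_eq_sum_of_support_subset (support_X_mul k q).subset, sum_map,
    bwInner_eq_sum_of_support_subset (subset_refl q.support), mul_sum]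
  refine sum_congr rfl fun b _ => ?_
  simp only [addLeftEmbedding_apply, coeff_X_mul, coeff_pderiv, add_comm b]
  by_cases hpb : p.coeff (Finsupp.single k 1 + b) = 0
  · simp [hpb]
  have hdeg : b.degree = e := by
    have := not_imp_comm.mp (hp.coeff_eq_zero (d := Finsupp.single k 1 + b)) hpb
    rw [map_add, Finsupp.degree_single] at this
    omega
  have hmult : (Nat.multinomial univ ⇑(Finsupp.single k 1 + b : Fin m →₀ ℕ) : ℝ) * (b k + 1)
      = (e + 1) * Nat.multinomial univ ⇑b := by
    exact_mod_cast hdeg ▸ Nat.multinomial_single_add_mul b k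
  have hpos : ∀ c : Fin m →₀ ℕ, (Nat.multinomial univ ⇑c : ℝ) ≠ 0 :=
    fun c => by exact_mod_cast (Nat.multinomial_pos _ _).ne'
  rw [mul_div_assoc', div_eq_div_iff (hpos _) (hpos _)]
  linear_combination -(p.coeff (Finsupp.single k 1 + b) * q.coeff b) * hmult

noncomputable def linForm (a : Fin m → ℝ) : MvPolynomial (Fin m) ℝ :=
  ∑ k, C (a k) * X k

theorem eval_linForm (x a : Fin m → ℝ) : eval x (linForm a) = ∑ k, a k * x k := by
  simp [linForm]

theorem pderiv_linForm (a : Fin m → ℝ) (k : Fin m) : pderiv k (linForm a) = C (a k) := by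
  classical
  simp [linForm, pderiv_X, Pi.single_apply]

theorem isHomogeneous_linForm (a : Fin m → ℝ) : (linForm a).IsHomogeneous 1 :=
  IsHomogeneous.sum _ _ _ fun _ _ => isHomogeneous_C_mul_X _ _

theorem bwInner_linForm_mul {e : ℕ} {p : MvPolynomial (Fin m) ℝ} (hp : p.IsHomogeneous (e + 1))
    (v : Fin m → ℝ) (q : MvPolynomial (Fin m) ℝ) :
    (e + 1 : ℝ) * bwInner p (linForm v * q) = ∑ k, v k * bwInner (pderiv k p) q := by
  simp only [← bwForm_apply, linForm, sum_mul, map_sum, mul_sum, C_mul', smul_mul_assoc,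
    map_smul, smul_eq_mul]
  refine sum_congr rfl fun k _ => ?_
  rw [mul_left_comm, bwForm_apply, bwInner_X_mul hp, bwForm_apply]

theorem bwInner_linForm_pow {e : ℕ} {p : MvPolynomial (Fin m) ℝ} (hp : p.IsHomogeneous e)
    (a : Fin m → ℝ) : bwInner p (linForm a ^ e) = eval a p := by
  induction e generalizing p with
  | zero =>
    obtain ⟨c, rfl⟩ : ∃ c, p = C c :=
      ⟨_, totalDegree_eq_zero_iff_eq_C.mp ((totalDegree_zero_iff_isHomogeneous _).mpr hp)⟩
    rw [pow_zero, bwInner_eq_sum_of_support_subset support_one.subset]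
    simp [Nat.multinomial]
  | succ e ih =>
    have heuler := congrArg (eval a) hp.sum_X_mul_pderiv
    rw [map_nsmul, nsmul_eq_mul] at heuler
    simp only [map_sum, map_mul, eval_X, Nat.cast_succ] at heuler
    refine mul_left_cancel₀ (Nat.cast_add_one_ne_zero e) ?_
    rw [pow_succ', bwInner_linForm_mul hp, ← heuler]
    refine sum_congr rfl fun k _ => ?_
    rw [ih (by simpa using hp.pderiv)]

theorem bwInner_linForm_mul_linForm_pow {e : ℕ} {p : MvPolynomial (Fin m) ℝ}
    (hp : p.IsHomogeneous (e + 1)) (x v : Fin m → ℝ) :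
    (e + 1 : ℝ) * bwInner p (linForm v * linForm x ^ e) = ∑ k, eval x (pderiv k p) * v k := by
  rw [bwInner_linForm_mul hp]
  refine sum_congr rfl fun k _ => ?_
  rw [bwInner_linForm_pow (by simpa using hp.pderiv), mul_comm]

theorem sq_eval_add_sq_div_le_bwInner {e : ℕ} (he : 0 < e) {p : MvPolynomial (Fin m) ℝ}
    (hp : p.IsHomogeneous e) {x v : Fin m → ℝ} (hx : ∑ k, x k ^ 2 = 1)
    (hv : ∑ k, v k ^ 2 = 1) (hvx : ∑ k, v k * x k = 0) :
    eval x p ^ 2 + (∑ k, eval x (pderiv k p) * v k) ^ 2 / e ≤ bwInner p p := by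
  obtain ⟨e, rfl⟩ := Nat.exists_eq_add_one.mpr he
  push_cast
  have hLx : eval x (linForm x) = 1 := by simpa [eval_linForm, sq] using hx
  have hLv : eval x (linForm v) = 0 := by rw [eval_linForm, hvx]
  set u := linForm x ^ (e + 1)
  set w := linForm v * linForm x ^ e
  have hu : u.IsHomogeneous (e + 1) := by simpa using (isHomogeneous_linForm x).pow (e + 1)
  have hw : w.IsHomogeneous (e + 1) := by
    simpa [add_comm] using (isHomogeneous_linForm v).mul ((isHomogeneous_linForm x).pow e)
  set a := eval x p
  set b := ∑ k, eval x (pderiv k p) * v k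
  have hpu : bwForm p u = a := bwInner_linForm_pow hp x
  have hpw : (e + 1 : ℝ) * bwForm p w = b := bwInner_linForm_mul_linForm_pow hp x v
  have huu : bwForm u u = 1 := by
    rw [bwForm_apply, bwInner_linForm_pow hu, map_pow, hLx, one_pow]
  have hwu : bwForm w u = 0 := by
    rw [bwForm_apply, bwInner_linForm_pow hw, map_mul, hLv, zero_mul]
  have hww : (e + 1 : ℝ) * bwForm w w = 1 := by
    rw [bwForm_apply, bwInner_linForm_mul_linForm_pow hw, ← hv]
    refine sum_congr rfl fun k _ => ?_
    simp [w, pderiv_linForm, hLx, hLv, sq]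
  have hsymm : bwForm u w = 0 := by rw [bwForm_isPosSemidef.eq]; exact hwu
  have he1 : (e + 1 : ℝ) ≠ 0 := Nat.cast_add_one_ne_zero e
  -- `a • u + b • w` is the orthogonal projection of `p` onto the span of `u` and `w`.
  have hpy : bwForm p (a • u + b • w) = a ^ 2 + b ^ 2 / (e + 1) := by
    simp only [map_add, map_smul, smul_eq_mul, hpu,
      eq_div_of_mul_eq he1 ((mul_comm _ _).trans hpw)]
    ring
  have hyy : bwForm (a • u + b • w) (a • u + b • w) = a ^ 2 + b ^ 2 / (e + 1) := by
    simp only [map_add, map_smul, LinearMap.add_apply, LinearMap.smul_apply, smul_eq_mul,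
      huu, hwu, hsymm, eq_div_of_mul_eq he1 ((mul_comm _ _).trans hww)]
    ring
  rw [← hyy, bwForm_apply]
  exact bwForm_isPosSemidef.apply_self_le_of_apply_eq (hpy.trans hyy.symm)

end BombieriWeyl

section

variable {n : ℕ}

theorem SingularAt.exists_unit_tangent {f : Fin n → MvPolynomial (Fin (n + 1)) ℝ}
    {x : Fin (n + 1) → ℝ} (hf : SingularAt f x) :
    ∃ w : Fin (n + 1) → ℝ, (∑ k, w k * x k = 0) ∧ ∑ k, w k ^ 2 = 1 ∧
      ∀ i, ∑ k, eval x (pderiv k (f i)) * w k = 0 := by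
  obtain ⟨v, hv0, hvx, hfv⟩ := hf
  have hpos : 0 < ∑ k, v k ^ 2 := by
    obtain ⟨k, hk⟩ := Function.ne_iff.mp hv0
    exact sum_pos' (fun j _ => sq_nonneg (v j)) ⟨k, mem_univ k, sq_pos_iff.mpr hk⟩
  set c := √(∑ k, v k ^ 2)
  refine ⟨fun k => c⁻¹ * v k, ?_, ?_, fun i => ?_⟩
  · simp only [mul_assoc, ← mul_sum, hvx, mul_zero]
  · simp only [mul_pow, ← mul_sum, inv_pow, Real.sq_sqrt hpos.le, c]
    exact inv_mul_cancel₀ hpos.ne'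
  · simp only [mul_left_comm _ c⁻¹, ← mul_sum, hfv i, mul_zero]

theorem sigmaMin_sq_le (d : Fin n → ℕ) (f : Fin n → MvPolynomial (Fin (n + 1)) ℝ)
    {x w : Fin (n + 1) → ℝ} (hwx : ∑ k, w k * x k = 0) (hw : ∑ k, w k ^ 2 = 1) :
    sigmaMin d f x ^ 2 ≤ ∑ i, (∑ k, eval x (pderiv k (f i)) * w k) ^ 2 / d i := by
  have hle : sigmaMin d f x ≤ √(∑ i, ((∑ k, eval x (pderiv k (f i)) * w k) / √(d i)) ^ 2) :=
    csInf_le ⟨0, by rintro _ ⟨_, _, rfl⟩; positivity⟩ ⟨w, ⟨hwx, hw⟩, rfl⟩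
  have h0 : 0 ≤ sigmaMin d f x :=
    Real.sInf_nonneg (by rintro _ ⟨_, _, rfl⟩; positivity)
  calc sigmaMin d f x ^ 2
      ≤ (√(∑ i, ((∑ k, eval x (pderiv k (f i)) * w k) / √(d i)) ^ 2)) ^ 2 := by gcongr
    _ = ∑ i, (∑ k, eval x (pderiv k (f i)) * w k) ^ 2 / d i := by
      rw [Real.sq_sqrt (by positivity)]
      simp only [div_pow, Real.sq_sqrt (Nat.cast_nonneg _)]

theorem inv_kappaAt_of_bwNormSys_eq_one {d : Fin n → ℕ}
    {f : Fin n → MvPolynomial (Fin (n + 1)) ℝ} (hf : bwNormSys f = 1) (x : Fin (n + 1) → ℝ) :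
    (kappaAt d f x)⁻¹ = ENNReal.ofReal √(sigmaMin d f x ^ 2 + ∑ i, eval x (f i) ^ 2) := by
  rw [kappaAt, hf, ENNReal.ofReal_one, one_div, inv_inv]

end

theorem inv_kappaAt_le_dist_of_mem_sigmaRx_general {n : ℕ} (d : Fin n → ℕ)
    (hd : ∀ i, 1 ≤ d i) (x : Fin (n + 1) → ℝ) (hx : x ∈ unitSphere n)
    (f : Fin n → MvPolynomial (Fin (n + 1)) ℝ) (hf : IsSystem d f)
    (hf1 : bwNormSys f = 1) (g : Fin n → MvPolynomial (Fin (n + 1)) ℝ)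
    (hg : g ∈ SigmaRx d x) :
    (kappaAt d f x)⁻¹ ≤ ENNReal.ofReal (bwNormSys (f - g)) := by
  obtain ⟨hg, hgx, hgsing⟩ := hg
  obtain ⟨w, hwx, hw, hgw⟩ := hgsing.exists_unit_tangent
  rw [inv_kappaAt_of_bwNormSys_eq_one hf1]
  refine ENNReal.ofReal_le_ofReal (Real.sqrt_le_sqrt ?_)
  calc sigmaMin d f x ^ 2 + ∑ i, eval x (f i) ^ 2
      ≤ ∑ i, (eval x (f i) ^ 2 + (∑ k, eval x (pderiv k (f i)) * w k) ^ 2 / d i) := by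
        rw [sum_add_distrib, add_comm]
        gcongr
        exact sigmaMin_sq_le d f hwx hw
    _ ≤ ∑ i, bwInner ((f - g) i) ((f - g) i) := by
        refine sum_le_sum fun i _ => ?_
        have key := sq_eval_add_sq_div_le_bwInner (hd i) ((hf i).sub (hg i)) hx hw hwx
        simpa only [Pi.sub_apply, map_sub, hgx i, sub_zero, sub_mul, sum_sub_distrib, hgw i]
          using key

/-- For every `x ∈ Sⁿ`, every `f ∈ H_d` with `‖f‖_W = 1`, and every `g ∈ Σ_ℝ(x)`,
one has `‖f - g‖_W ≥ κ̃(f,x)⁻¹`. -/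
theorem inv_kappaAt_le_dist_of_mem_sigmaRx {n : ℕ} (hn : 1 ≤ n) (d : Fin n → ℕ)
    (hd : ∀ i, 1 ≤ d i) (x : Fin (n + 1) → ℝ) (hx : x ∈ unitSphere n)
    (f : Fin n → MvPolynomial (Fin (n + 1)) ℝ) (hf : IsSystem d f)
    (hf1 : bwNormSys f = 1) (g : Fin n → MvPolynomial (Fin (n + 1)) ℝ)
    (hg : g ∈ SigmaRx d x) :
    (kappaAt d f x)⁻¹ ≤ ENNReal.ofReal (bwNormSys (f - g)) :=
  inv_kappaAt_le_dist_of_mem_sigmaRx_general d hd x hx f hf hf1 g hg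
end

section
/- For every nonzero f ∈ H_d, the two condition numbers are equivalent up to factors polynomial in n: κ̃(f)/√n ≤ κ(f) ≤ √(2n)·κ̃(f). -/
open MvPolynomial Finset ENNReal

/-- The norm `‖f‖ = max_{1 ≤ i ≤ n} ‖f_i‖_W` used in [CKMW1]. -/
noncomputable def supNormSys {n : ℕ} (f : Fin n → MvPolynomial (Fin (n + 1)) ℝ) : ℝ :=
  ⨆ i, bwNorm (f i)

/-- `‖f(x)‖_∞ = max_i |f_i(x)|`. -/
noncomputable def evalInfNorm {n : ℕ} (f : Fin n → MvPolynomial (Fin (n + 1)) ℝ)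
    (x : Fin (n + 1) → ℝ) : ℝ :=
  ⨆ i, |MvPolynomial.eval x (f i)|

/-- `μ̃_norm(f, x) = ‖f‖_W ‖(Df(x)|_{T_x Sⁿ})⁻¹ diag(√dᵢ)‖` (spectral norm), with
value `+∞` when `Df(x)|_{T_x Sⁿ}` is singular: since
`‖(Df(x)|_{T_x Sⁿ})⁻¹ diag(√dᵢ)‖ = (sigmaMin d f x)⁻¹`, it is
`‖f‖_W / sigmaMin d f x` in `ℝ≥0∞`. -/
noncomputable def muTilde {n : ℕ} (d : Fin n → ℕ)
    (f : Fin n → MvPolynomial (Fin (n + 1)) ℝ) (x : Fin (n + 1) → ℝ) : ℝ≥0∞ :=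
  ENNReal.ofReal (bwNormSys f) / ENNReal.ofReal (sigmaMin d f x)

/-- `μ_norm(f, x) = √n ‖f‖ ‖(Df(x)|_{T_x Sⁿ})⁻¹ diag(√dᵢ)‖` (spectral norm), with
value `+∞` when `Df(x)|_{T_x Sⁿ}` is singular. -/
noncomputable def muNorm {n : ℕ} (d : Fin n → ℕ)
    (f : Fin n → MvPolynomial (Fin (n + 1)) ℝ) (x : Fin (n + 1) → ℝ) : ℝ≥0∞ :=
  ENNReal.ofReal (Real.sqrt n * supNormSys f) / ENNReal.ofReal (sigmaMin d f x)

/-- The condition number of [CKMW1]: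
`κ(f) = max_{x ∈ Sⁿ} min {μ_norm(f,x), ‖f‖ / ‖f(x)‖_∞}`. -/
noncomputable def kappaCKMW {n : ℕ} (d : Fin n → ℕ)
    (f : Fin n → MvPolynomial (Fin (n + 1)) ℝ) : ℝ≥0∞ :=
  ⨆ x ∈ unitSphere n,
    min (muNorm d f x) (ENNReal.ofReal (supNormSys f) / ENNReal.ofReal (evalInfNorm f x))

/-! Both condition numbers divide a norm of `f` by a measure of how far `x` is from being a
multiple zero. The norms compare as `‖f‖ ≤ ‖f‖_W ≤ √n ‖f‖` and `‖f(x)‖_∞ ≤ ‖f(x)‖₂ ≤ √n ‖f(x)‖_∞`.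
With `σ = ‖f‖_W / μ̃_norm(f,x)`, the denominator `√(σ² + ‖f(x)‖₂²)` of `κ̃(f,x)` lies between
`max(σ, ‖f(x)‖₂)` and `√2 · max(σ, ‖f(x)‖₂)`; comparing it with the two terms of the minimum
defining `κ` gives the pointwise bounds, and taking suprema over `Sⁿ` gives the theorem. -/

lemma iSup_le_sqrt_sum_sq {ι : Type*} [Fintype ι] (a : ι → ℝ) :
    ⨆ i, a i ≤ √(∑ i, a i ^ 2) :=
  Real.iSup_le (fun i => (le_abs_self _).trans <| by
    rw [← Real.sqrt_sq_eq_abs]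
    exact Real.sqrt_le_sqrt (single_le_sum (fun j _ => sq_nonneg (a j)) (mem_univ i)))
    (Real.sqrt_nonneg _)

lemma sum_sq_le_card_mul_iSup_sq {ι : Type*} [Fintype ι] {a : ι → ℝ} (ha : ∀ i, 0 ≤ a i) :
    ∑ i, a i ^ 2 ≤ Fintype.card ι * (⨆ i, a i) ^ 2 := by
  have hle : ∀ i, a i ≤ ⨆ j, a j := le_ciSup (Set.finite_range a).bddAbove
  calc ∑ i, a i ^ 2 ≤ ∑ _i : ι, (⨆ j, a j) ^ 2 :=
        sum_le_sum fun i _ => pow_le_pow_left₀ (ha i) (hle i) 2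
    _ = Fintype.card ι * (⨆ i, a i) ^ 2 := by rw [sum_const, card_univ, nsmul_eq_mul]

lemma sqrt_sum_sq_le_sqrt_card_mul_iSup {ι : Type*} [Fintype ι] {a : ι → ℝ}
    (ha : ∀ i, 0 ≤ a i) : √(∑ i, a i ^ 2) ≤ √(Fintype.card ι) * ⨆ i, a i := by
  rw [← Real.sqrt_sq (Real.iSup_nonneg ha), ← Real.sqrt_mul (Nat.cast_nonneg _)]
  exact Real.sqrt_le_sqrt (sum_sq_le_card_mul_iSup_sq ha)

lemma ENNReal.ofReal_div_ofReal_le_of_scale {a b c d t : ℝ} (ht : 0 < t) (hac : t * a ≤ c)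
    (hdb : d ≤ t * b) :
    ENNReal.ofReal a / ENNReal.ofReal b ≤ ENNReal.ofReal c / ENNReal.ofReal d := by
  rw [← ENNReal.mul_div_mul_left (ENNReal.ofReal a) _ (ENNReal.ofReal_pos.2 ht).ne'
    ENNReal.ofReal_ne_top, ← ENNReal.ofReal_mul ht.le, ← ENNReal.ofReal_mul ht.le]
  exact ENNReal.div_le_div (ENNReal.ofReal_le_ofReal hac) (ENNReal.ofReal_le_ofReal hdb)

lemma ENNReal.ofReal_mul_ofReal_div {a b c : ℝ} (hc : 0 ≤ c) :
    ENNReal.ofReal c * (ENNReal.ofReal a / ENNReal.ofReal b) =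
      ENNReal.ofReal (c * a) / ENNReal.ofReal b := by
  rw [← mul_div_assoc, ENNReal.ofReal_mul hc]

section Norms

variable {n : ℕ} (f : Fin n → MvPolynomial (Fin (n + 1)) ℝ)

lemma bwInner_self_nonneg {m : ℕ} (p : MvPolynomial (Fin m) ℝ) : 0 ≤ bwInner p p :=
  sum_nonneg fun _ _ => div_nonneg (mul_self_nonneg _) (Nat.cast_nonneg _)

lemma bwNormSys_eq_sqrt_sum_bwNorm_sq : bwNormSys f = √(∑ i, bwNorm (f i) ^ 2) := by
  simp only [bwNormSys, bwNorm, Real.sq_sqrt (bwInner_self_nonneg _)]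

lemma supNormSys_le_bwNormSys : supNormSys f ≤ bwNormSys f := by
  rw [bwNormSys_eq_sqrt_sum_bwNorm_sq]
  exact iSup_le_sqrt_sum_sq _

lemma bwNormSys_le_sqrt_mul_supNormSys : bwNormSys f ≤ √n * supNormSys f := by
  rw [bwNormSys_eq_sqrt_sum_bwNorm_sq]
  simpa only [supNormSys, Fintype.card_fin] using
    sqrt_sum_sq_le_sqrt_card_mul_iSup (a := fun i => bwNorm (f i)) fun _ => Real.sqrt_nonneg _

lemma supNormSys_nonneg : 0 ≤ supNormSys f :=
  Real.iSup_nonneg fun _ => Real.sqrt_nonneg _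

variable (x : Fin (n + 1) → ℝ)

lemma evalInfNorm_le_sqrt_sum_sq : evalInfNorm f x ≤ √(∑ i, eval x (f i) ^ 2) := by
  simpa only [evalInfNorm, sq_abs] using iSup_le_sqrt_sum_sq (|eval x <| f ·|)

lemma sqrt_sum_sq_le_sqrt_mul_evalInfNorm :
    √(∑ i, eval x (f i) ^ 2) ≤ √n * evalInfNorm f x := by
  simpa only [evalInfNorm, sq_abs, Fintype.card_fin] using
    sqrt_sum_sq_le_sqrt_card_mul_iSup (a := (|eval x <| f ·|)) fun _ => abs_nonneg _

lemma sigmaMin_nonneg (d : Fin n → ℕ) : 0 ≤ sigmaMin d f x :=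
  Real.sInf_nonneg (by rintro _ ⟨v, _, rfl⟩; exact Real.sqrt_nonneg _)

end Norms

section Pointwise

variable {n : ℕ} (d : Fin n → ℕ) (f : Fin n → MvPolynomial (Fin (n + 1)) ℝ)
  (x : Fin (n + 1) → ℝ)

noncomputable def kappaCKMWAt : ℝ≥0∞ :=
  min (muNorm d f x) (ENNReal.ofReal (supNormSys f) / ENNReal.ofReal (evalInfNorm f x))

lemma kappaAt_le_sqrt_mul_kappaCKMWAt (hn : 1 ≤ n) :
    kappaAt d f x ≤ ENNReal.ofReal √n * kappaCKMWAt d f x := by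
  have hsn : 1 ≤ √(n : ℝ) := Real.one_le_sqrt.2 (by exact_mod_cast hn)
  have hA := bwNormSys_le_sqrt_mul_supNormSys f
  have hB : 0 ≤ ∑ i, eval x (f i) ^ 2 := sum_nonneg fun _ _ => sq_nonneg _
  have hσD : sigmaMin d f x ≤ √(sigmaMin d f x ^ 2 + ∑ i, eval x (f i) ^ 2) :=
    Real.le_sqrt_of_sq_le (by linarith)
  have heD : evalInfNorm f x ≤ √(sigmaMin d f x ^ 2 + ∑ i, eval x (f i) ^ 2) :=
    (evalInfNorm_le_sqrt_sum_sq f x).trans (Real.sqrt_le_sqrt (by nlinarith))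
  rw [kappaCKMWAt, mul_min, muNorm, ENNReal.ofReal_mul_ofReal_div (Real.sqrt_nonneg _),
    ENNReal.ofReal_mul_ofReal_div (Real.sqrt_nonneg _)]
  have hAN : bwNormSys f ≤ √n * (√n * supNormSys f) :=
    hA.trans (le_mul_of_one_le_left (mul_nonneg (Real.sqrt_nonneg _) (supNormSys_nonneg f)) hsn)
  exact le_min (ENNReal.div_le_div (ENNReal.ofReal_le_ofReal hAN) (ENNReal.ofReal_le_ofReal hσD))
    (ENNReal.div_le_div (ENNReal.ofReal_le_ofReal hA) (ENNReal.ofReal_le_ofReal heD))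

lemma kappaCKMWAt_le_sqrt_two_mul_kappaAt (hn : 1 ≤ n) :
    kappaCKMWAt d f x ≤ ENNReal.ofReal √(2 * n) * kappaAt d f x := by
  set σ := sigmaMin d f x
  set B := ∑ i, eval x (f i) ^ 2
  have hσ : 0 ≤ σ := sigmaMin_nonneg f x d
  have hNA := supNormSys_le_bwNormSys f
  have hs2n : √(2 * n : ℝ) = √2 * √n := Real.sqrt_mul zero_le_two _
  have hs2n_pos : 0 < √(2 * n : ℝ) := Real.sqrt_pos.2 (by positivity)
  rw [kappaAt, ENNReal.ofReal_mul_ofReal_div hs2n_pos.le]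
  rcases le_total B (σ ^ 2) with hBσ | hσB
  · refine (min_le_left _ _).trans (ENNReal.ofReal_div_ofReal_le_of_scale
      (Real.sqrt_pos.2 zero_lt_two) ?_ ?_)
    · rw [hs2n, ← mul_assoc]
      exact mul_le_mul_of_nonneg_left hNA (by positivity)
    · calc √(σ ^ 2 + B) ≤ √(2 * σ ^ 2) := Real.sqrt_le_sqrt (by linarith)
        _ = √2 * σ := by rw [Real.sqrt_mul zero_le_two, Real.sqrt_sq hσ]
  · refine (min_le_right _ _).trans (ENNReal.ofReal_div_ofReal_le_of_scale hs2n_pos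
      (mul_le_mul_of_nonneg_left hNA hs2n_pos.le) ?_)
    calc √(σ ^ 2 + B) ≤ √2 * √B := by
          rw [← Real.sqrt_mul zero_le_two]; exact Real.sqrt_le_sqrt (by linarith)
      _ ≤ √2 * (√n * evalInfNorm f x) :=
          mul_le_mul_of_nonneg_left (sqrt_sum_sq_le_sqrt_mul_evalInfNorm f x) (by positivity)
      _ = √(2 * n) * evalInfNorm f x := by rw [hs2n, mul_assoc]

end Pointwise

theorem kappa_equiv_kappaCKMW_general {n : ℕ} (hn : 1 ≤ n) (d : Fin n → ℕ)
    (f : Fin n → MvPolynomial (Fin (n + 1)) ℝ) :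
    kappa d f / ENNReal.ofReal (Real.sqrt n) ≤ kappaCKMW d f ∧
      kappaCKMW d f ≤ ENNReal.ofReal (Real.sqrt (2 * n)) * kappa d f := by
  constructor
  · refine ENNReal.div_le_of_le_mul' (iSup₂_le fun x hx => ?_)
    refine (kappaAt_le_sqrt_mul_kappaCKMWAt d f x hn).trans (mul_le_mul_right ?_ _)
    exact le_iSup₂ (f := fun x (_ : x ∈ unitSphere n) => kappaCKMWAt d f x) x hx
  · refine iSup₂_le fun x hx => ?_
    refine (kappaCKMWAt_le_sqrt_two_mul_kappaAt d f x hn).trans (mul_le_mul_right ?_ _)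
    exact le_iSup₂ (f := fun x (_ : x ∈ unitSphere n) => kappaAt d f x) x hx

/-- **Equivalence of the condition numbers.** For every nonzero `f ∈ H_d`,
`κ̃(f)/√n ≤ κ(f) ≤ √(2n)·κ̃(f)`. -/
theorem kappa_equiv_kappaCKMW {n : ℕ} (hn : 1 ≤ n) (d : Fin n → ℕ)
    (hd : ∀ i, 1 ≤ d i) (f : Fin n → MvPolynomial (Fin (n + 1)) ℝ)
    (hf : IsSystem d f) (hf0 : f ≠ 0) :
    kappa d f / ENNReal.ofReal (Real.sqrt n) ≤ kappaCKMW d f ∧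
      kappaCKMW d f ≤ ENNReal.ofReal (Real.sqrt (2 * n)) * kappa d f :=
  kappa_equiv_kappaCKMW_general hn d f
end
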